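/- Under strong ignorability {Y(0),Y(1)} ⫫ T | X and overlap 0 < e(X) < 1, the ATT satisfies E[Y(1) − Y(0) | T=1] = (1/P(T=1)) · E[ T·Y − (1−T)·(e(X)/(1−e(X)))·Y ]. -/

import Mathlib

open MeasureTheory ProbabilityTheory Set

lemma condexp_indicator_mul_of_condIndep {Ω : Type*} (mX : MeasurableSpace Ω)
    [mΩ : MeasurableSpace Ω]
    [StandardBorelSpace Ω] (μ : Measure Ω) [IsProbabilityMeasure μ] (hmX : mX ≤ mΩ)
    (T g : Ω → ℝ) (hTmeas : Measurable T) (hgmeas : Measurable g)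
    (hgint : Integrable g μ)
    (hindep : CondIndepFun (mΩ := mΩ) mX hmX T g μ) :
    μ[(T ⁻¹' {1}).indicator g | mX]
      =ᵐ[μ] fun ω => (μ⟦T ⁻¹' {1} | mX⟧) ω * (μ[g | mX]) ω := by
  set A : Set Ω := T ⁻¹' {1} with hAdef
  have hA : MeasurableSet A := hTmeas (measurableSet_singleton 1)
  set κ := condExpKernel (mΩ := mΩ) μ mX with hκdef
  have h1 : ∀ q : ℚ, ∀ᵐ ω ∂μ,
      κ ω (A ∩ g ⁻¹' Iic (q : ℝ)) = κ ω A * κ ω (g ⁻¹' Iic (q : ℝ)) := fun q =>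
    ae_of_ae_trim hmX
      (ProbabilityTheory.Kernel.IndepFun.measure_inter_preimage_eq_mul hindep
        {1} (Iic (q : ℝ)) (measurableSet_singleton 1) measurableSet_Iic)
  have h2 : ∀ᵐ ω ∂μ, ∀ q : ℚ,
      κ ω (A ∩ g ⁻¹' Iic (q : ℝ)) = κ ω A * κ ω (g ⁻¹' Iic (q : ℝ)) :=
    (MeasureTheory.ae_all_iff).2 h1
  have h3 : ∀ᵐ ω ∂μ, Integrable g (κ ω) := hgint.condExpKernel_ae
  have hmain : ∀ᵐ ω ∂μ, ∫ y, A.indicator g y ∂(κ ω)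
      = (κ ω A).toReal * ∫ y, g y ∂(κ ω) := by
    filter_upwards [h2, h3] with ω hω hgω
    have hfin1 : IsFiniteMeasure (((κ ω).restrict A).map g) := by
      constructor
      rw [Measure.map_apply hgmeas MeasurableSet.univ]
      exact lt_of_le_of_lt (Measure.restrict_apply_le _ _) (measure_lt_top _ _)
    have hfin2 : IsFiniteMeasure ((κ ω A) • ((κ ω).map g)) := by
      constructor
      rw [Measure.smul_apply, Measure.map_apply hgmeas MeasurableSet.univ, smul_eq_mul]
      exact ENNReal.mul_lt_top (measure_lt_top _ _) (measure_lt_top _ _)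
    have hmeq : ((κ ω).restrict A).map g = (κ ω A) • ((κ ω).map g) := by
      refine ext_of_generate_finite _ Real.borel_eq_generateFrom_Iic_rat
        Real.isPiSystem_Iic_rat ?_ ?_
      · rintro s ⟨_, ⟨q, rfl⟩, hs⟩
        simp only [mem_singleton_iff] at hs
        subst hs
        rw [Measure.map_apply hgmeas measurableSet_Iic,
          Measure.restrict_apply (hgmeas measurableSet_Iic),
          Measure.smul_apply, Measure.map_apply hgmeas measurableSet_Iic, smul_eq_mul,
          Set.inter_comm]
        exact hω q
      · simp [Measure.map_apply hgmeas MeasurableSet.univ,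
          Measure.restrict_apply MeasurableSet.univ, measure_univ]
    calc ∫ y, A.indicator g y ∂(κ ω) = ∫ y in A, g y ∂(κ ω) := integral_indicator hA
      _ = ∫ x, x ∂(((κ ω).restrict A).map g) :=
        (integral_map (f := fun x => x) hgmeas.aemeasurable aestronglyMeasurable_id).symm
      _ = ∫ x, x ∂((κ ω A) • ((κ ω).map g)) := by rw [hmeq]
      _ = (κ ω A).toReal * ∫ x, x ∂((κ ω).map g) := by
        rw [integral_smul_measure]; rfl
      _ = (κ ω A).toReal * ∫ y, g y ∂(κ ω) := by
        rw [integral_map (f := fun x => x) hgmeas.aemeasurable aestronglyMeasurable_id]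
  have hc1 : μ[A.indicator g | mX] =ᵐ[μ] fun ω => ∫ y, A.indicator g y ∂(κ ω) :=
    condExp_ae_eq_integral_condExpKernel hmX (hgint.indicator hA)
  have hc2 : (fun ω => (κ ω A).toReal) =ᵐ[μ] μ⟦A | mX⟧ :=
    condExpKernel_ae_eq_condExp hmX hA
  have hc3 : μ[g | mX] =ᵐ[μ] fun ω => ∫ y, g y ∂(κ ω) :=
    condExp_ae_eq_integral_condExpKernel hmX hgint
  filter_upwards [hmain, hc1, hc2, hc3] with ω h1ω h2ω h3ω h4ω
  rw [h2ω, h1ω, h3ω, h4ω]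

theorem ipw_att_identification {Ω : Type*} (mX : MeasurableSpace Ω) [mΩ : MeasurableSpace Ω]
    [StandardBorelSpace Ω] (μ : Measure Ω) [IsProbabilityMeasure μ]
    (hmX : mX ≤ mΩ)
    (T Y Y0 Y1 e : Ω → ℝ)
    (hTmeas : Measurable T) (hY0meas : Measurable Y0) (hY1meas : Measurable Y1)
    (hemeas : Measurable[mX] e)
    (hT : ∀ ω, T ω = 0 ∨ T ω = 1)
    (hY : ∀ ω, Y ω = T ω * Y1 ω + (1 - T ω) * Y0 ω)
    (he : e =ᵐ[μ] μ[T | mX])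
    (hoverlap : ∀ᵐ ω ∂μ, 0 < e ω ∧ e ω < 1)
    (hindep : CondIndepFun (mΩ := mΩ) mX hmX T (fun ω => (Y0 ω, Y1 ω)) μ)
    (hint : Integrable (fun ω => T ω * Y ω - (1 - T ω) * (e ω / (1 - e ω)) * Y ω) μ)
    (hY0int : Integrable Y0 μ) (hY1int : Integrable Y1 μ)
    (hpos : 0 < (μ {ω | T ω = 1}).toReal) :
    (∫ ω in {ω | T ω = 1}, (Y1 ω - Y0 ω) ∂μ) / (μ {ω | T ω = 1}).toReal
      = (1 / (μ {ω | T ω = 1}).toReal)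
        * ∫ ω, (T ω * Y ω - (1 - T ω) * (e ω / (1 - e ω)) * Y ω) ∂μ := by
  letI : MeasurableSpace Ω := mΩ
  have hAset : {ω | T ω = 1} = T ⁻¹' {1} := rfl
  have hTm : Measurable[mΩ] T := hTmeas
  have hY0m : Measurable[mΩ] Y0 := hY0meas
  have hY1m : Measurable[mΩ] Y1 := hY1meas
  have hA : MeasurableSet[mΩ] (T ⁻¹' {1}) := hTm (measurableSet_singleton 1)
  -- pointwise facts
  have hTind0 : ∀ ω, (T ⁻¹' {1}).indicator Y0 ω = T ω * Y0 ω := by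
    intro ω
    rcases hT ω with h | h <;>
      simp [Set.indicator_apply, Set.mem_preimage, h]
  have hTind1 : ∀ ω, (T ⁻¹' {1}).indicator Y1 ω = T ω * Y1 ω := by
    intro ω
    rcases hT ω with h | h <;>
      simp [Set.indicator_apply, Set.mem_preimage, h]
  have hTindc : T = (T ⁻¹' {1}).indicator (fun _ => (1 : ℝ)) := by
    funext ω
    rcases hT ω with h | h <;> simp [Set.indicator_apply, Set.mem_preimage, h]
  -- integrability
  have hTY1int : Integrable (fun ω => T ω * Y1 ω) μ := by
    refine hY1int.mono ((hTm.mul hY1m).aestronglyMeasurable) (ae_of_all _ fun ω => ?_)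
    rcases hT ω with h | h <;> simp [h, abs_nonneg]
  have hTY0int : Integrable (fun ω => T ω * Y0 ω) μ := by
    refine hY0int.mono ((hTm.mul hY0m).aestronglyMeasurable) (ae_of_all _ fun ω => ?_)
    rcases hT ω with h | h <;> simp [h, abs_nonneg]
  have hgint : Integrable (fun ω => (1 - T ω) * Y0 ω) μ := by
    have := hY0int.sub hTY0int
    refine this.congr (ae_of_all _ fun ω => ?_)
    simp only [Pi.sub_apply]
    ring
  have hwgint : Integrable (fun ω => e ω / (1 - e ω) * ((1 - T ω) * Y0 ω)) μ := by
    have := hTY1int.sub hint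
    refine this.congr (ae_of_all _ fun ω => ?_)
    simp only [Pi.sub_apply]
    rw [hY ω]
    rcases hT ω with h | h <;> rw [h] <;> ring
  -- conditional independence of T and Y0
  have hindep0 : CondIndepFun (mΩ := mΩ) mX hmX T Y0 μ :=
    hindep.comp measurable_id measurable_fst
  have key0 := condexp_indicator_mul_of_condIndep (mΩ := mΩ) mX μ hmX T Y0 hTm hY0m hY0int hindep0
  -- e is a.e. equal to the conditional probability of A
  have hPA : e =ᵐ[μ] μ⟦T ⁻¹' {1} | mX⟧ := by
    refine he.trans (condExp_congr_ae (ae_of_all _ fun ω => ?_))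
    rcases hT ω with h | h <;> simp [Set.indicator_apply, Set.mem_preimage, h]
  -- key : condexp of T*Y0
  have key : μ[(fun ω => T ω * Y0 ω) | mX] =ᵐ[μ] fun ω => e ω * (μ[Y0 | mX]) ω := by
    have h1 : μ[(fun ω => T ω * Y0 ω) | mX] =ᵐ[μ] μ[(T ⁻¹' {1}).indicator Y0 | mX] :=
      condExp_congr_ae (ae_of_all _ fun ω => (hTind0 ω).symm)
    refine h1.trans (key0.trans ?_)
    filter_upwards [hPA] with ω hω
    rw [← hω]
  -- condexp of (1-T)*Y0
  have hcg : μ[(fun ω => (1 - T ω) * Y0 ω) | mX]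
      =ᵐ[μ] fun ω => (1 - e ω) * (μ[Y0 | mX]) ω := by
    have h1 : μ[(fun ω => (1 - T ω) * Y0 ω) | mX]
        =ᵐ[μ] μ[(Y0 - fun ω => T ω * Y0 ω) | mX] :=
      condExp_congr_ae (ae_of_all _ fun ω => by simp [Pi.sub_apply]; ring)
    refine h1.trans ((condExp_sub hY0int hTY0int mX).trans ?_)
    filter_upwards [key] with ω hω
    simp only [Pi.sub_apply, hω]
    ring
  -- multiply by the mX-measurable weight
  have hwsm : StronglyMeasurable[mX] (fun ω => e ω / (1 - e ω)) :=
    (hemeas.div (measurable_const.sub hemeas)).stronglyMeasurable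
  have hmul : μ[(fun ω => e ω / (1 - e ω) * ((1 - T ω) * Y0 ω)) | mX]
      =ᵐ[μ] fun ω => e ω / (1 - e ω) * (μ[(fun ω => (1 - T ω) * Y0 ω) | mX]) ω :=
    condExp_mul_of_stronglyMeasurable_left hwsm hwgint hgint
  -- core integral identity
  have ha : μ[(fun ω => e ω / (1 - e ω) * ((1 - T ω) * Y0 ω)) | mX]
      =ᵐ[μ] fun ω => e ω * (μ[Y0 | mX]) ω := by
    filter_upwards [hmul, hcg, hoverlap] with ω h1 h2 h3
    rw [h1, h2]
    have hne : (1 : ℝ) - e ω ≠ 0 := ne_of_gt (sub_pos.2 h3.2)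
    field_simp
  have hcore : ∫ ω, e ω / (1 - e ω) * ((1 - T ω) * Y0 ω) ∂μ = ∫ ω, T ω * Y0 ω ∂μ := by
    rw [← integral_condExp hmX (f := fun ω => e ω / (1 - e ω) * ((1 - T ω) * Y0 ω)),
      integral_congr_ae ha, ← integral_congr_ae key, integral_condExp hmX]
  -- numerator
  have hnum : ∫ ω in {ω | T ω = 1}, (Y1 ω - Y0 ω) ∂μ
      = (∫ ω, T ω * Y1 ω ∂μ) - ∫ ω, T ω * Y0 ω ∂μ := by
    rw [hAset, ← integral_indicator (μ := μ) hA, ← integral_sub hTY1int hTY0int]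
    refine integral_congr_ae (ae_of_all _ fun ω => ?_)
    rcases hT ω with h | h <;>
      simp [Set.indicator_apply, Set.mem_preimage, h]
  -- RHS integral
  have hrhs : ∫ ω, (T ω * Y ω - (1 - T ω) * (e ω / (1 - e ω)) * Y ω) ∂μ
      = (∫ ω, T ω * Y1 ω ∂μ) - ∫ ω, e ω / (1 - e ω) * ((1 - T ω) * Y0 ω) ∂μ := by
    rw [← integral_sub hTY1int hwgint]
    refine integral_congr_ae (ae_of_all _ fun ω => ?_)
    simp only []
    rw [hY ω]
    rcases hT ω with h | h <;> rw [h] <;> ring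
  rw [hnum, hrhs, hcore]
  ring
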